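/- Suppose E ln|φ₀ + b₀ ε₁| < 0. Then the process (S_t)_{t∈ℤ} solves the bilinear recursion: for every t ∈ ℤ, almost surely S_t = μ₀ + φ₀ S_{t−2} + b₀ S_{t−2} ε_{t−1} + ε_t. -/

import Mathlib

open MeasureTheory ProbabilityTheory Filter
open scoped ENNReal NNReal

noncomputable section

/-- Positive part of the logarithm, valued in `ℝ≥0∞`. -/
def logPlus (x : ℝ) : ENNReal := ENNReal.ofReal (Real.log x)

/-- Negative part of the logarithm with the convention `log 0 = -∞`. -/
def logMinus (x : ℝ) : ENNReal := if x = 0 then ⊤ else ENNReal.ofReal (-(Real.log x))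

/-- Truncated log: `log|x|` clipped below at `-M`, with `blG M 0 = -M`. -/
def blG (M : ℕ) (x : ℝ) : ℝ := if x = 0 then -(M:ℝ) else max (Real.log |x|) (-(M:ℝ))

lemma measurable_blG (M : ℕ) : Measurable (blG M) := by
  unfold blG
  exact Measurable.ite (measurableSet_eq) measurable_const
    ((Real.measurable_log.comp measurable_abs).max measurable_const)

lemma abs_blG_le (M : ℕ) (x : ℝ) : |blG M x| ≤ M + |x| := by
  have hM : (0:ℝ) ≤ M := Nat.cast_nonneg M
  have hx : (0:ℝ) ≤ |x| := abs_nonneg x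
  unfold blG
  split_ifs with h
  · simp only [h, abs_zero, add_zero, abs_neg, Nat.abs_cast, le_refl]
  · rw [abs_le]
    refine ⟨le_trans (by linarith) (le_max_right _ _), max_le ?_ (by linarith)⟩
    have := Real.log_le_sub_one_of_pos (abs_pos.mpr h)
    linarith

lemma abs_le_exp_blG (M : ℕ) (x : ℝ) : |x| ≤ Real.exp (blG M x) := by
  unfold blG
  split_ifs with h
  · simp [h, (Real.exp_pos _).le]
  · calc |x| = Real.exp (Real.log |x|) := (Real.exp_log (abs_pos.mpr h)).symm
      _ ≤ _ := Real.exp_le_exp.mpr (le_max_left _ _)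

lemma log_abs_le_blG (M : ℕ) {x : ℝ} (h : x ≠ 0) : Real.log |x| ≤ blG M x := by
  unfold blG; rw [if_neg h]; exact le_max_left _ _

lemma ofReal_blG (M : ℕ) (hM : 1 ≤ M) (x : ℝ) :
    ENNReal.ofReal (blG M x) = logPlus |x| := by
  have hM' : (0:ℝ) < M := by exact_mod_cast hM
  unfold blG logPlus
  split_ifs with h
  · simp [h, Real.log_zero, ENNReal.ofReal_eq_zero.mpr (by linarith : -(M:ℝ) ≤ 0)]
  · rcases le_or_gt 0 (Real.log |x|) with h0 | h0
    · rw [max_eq_left (by linarith)]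
    · rw [ENNReal.ofReal_eq_zero.mpr (max_le h0.le (by linarith)),
        ENNReal.ofReal_eq_zero.mpr h0.le]

lemma ofReal_neg_blG (M : ℕ) (x : ℝ) :
    ENNReal.ofReal (-(blG M x)) = min (logMinus |x|) M := by
  unfold blG logMinus
  by_cases h : x = 0
  · simp [h, ENNReal.ofReal_natCast]
  · rw [if_neg h, if_neg (abs_ne_zero.mpr h)]
    have h1 := min_neg_neg (Real.log |x|) (-(M:ℝ))
    rw [neg_neg] at h1
    have hmono : Monotone ENNReal.ofReal := fun a b h => ENNReal.ofReal_le_ofReal h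
    rw [← h1, hmono.map_min, ENNReal.ofReal_natCast]

lemma iSup_min_natCast (a : ℝ≥0∞) : ⨆ n : ℕ, min a (n : ℝ≥0∞) = a := by
  calc ⨆ n : ℕ, min a (n : ℝ≥0∞) = a ⊓ ⨆ n : ℕ, (n : ℝ≥0∞) :=
        (inf_iSup_eq a (fun n : ℕ => (n : ℝ≥0∞))).symm
    _ = a := by rw [ENNReal.iSup_natCast, inf_top_eq]

/-- `E log |X|` as an extended real number, with the convention `log 0 = -∞`. -/
def elogAbs {Ω : Type*} [MeasurableSpace Ω] (P : Measure Ω) (X : Ω → ℝ) : EReal :=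
  ((∫⁻ ω, logPlus |X ω| ∂P : ENNReal) : EReal) - ((∫⁻ ω, logMinus |X ω| ∂P : ENNReal) : EReal)

lemma measurable_logMinus : Measurable logMinus :=
  Measurable.ite measurableSet_eq measurable_const
    (ENNReal.measurable_ofReal.comp Real.measurable_log.neg)

lemma exists_blG_neg_integral {Ω : Type*} [MeasurableSpace Ω] (P : Measure Ω)
    [IsProbabilityMeasure P] (f : Ω → ℝ) (hf : Measurable f) (hfi : Integrable f P)
    (hlog : elogAbs P f < 0) :
    ∃ M : ℕ, 1 ≤ M ∧ ∫ ω, blG M (f ω) ∂P < 0 := by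
  set A := ∫⁻ ω, logPlus |f ω| ∂P with hAdef
  set B := ∫⁻ ω, logMinus |f ω| ∂P with hBdef
  have hA : A ≠ ⊤ := by
    have hle : A ≤ ∫⁻ ω, ENNReal.ofReal ‖f ω‖ ∂P := by
      apply lintegral_mono
      intro ω
      unfold logPlus
      apply ENNReal.ofReal_le_ofReal
      rw [Real.norm_eq_abs]
      rcases eq_or_ne (f ω) 0 with h | h
      · simp [h]
      · have := Real.log_le_sub_one_of_pos (abs_pos.mpr h)
        linarith
    have hfin : (∫⁻ ω, ENNReal.ofReal ‖f ω‖ ∂P) < ⊤ := by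
      simp_rw [ofReal_norm]
      exact hfi.hasFiniteIntegral
    exact (lt_of_le_of_lt hle hfin).ne
  have hAB : A < B := by
    rcases eq_or_ne B ⊤ with hB | hB
    · rw [hB]; exact hA.lt_top
    · have h2 := (EReal.sub_lt_iff (Or.inl (EReal.coe_ennreal_ne_bot B))
        (Or.inl (by simpa using hB))).mp hlog
      rw [zero_add] at h2
      exact EReal.coe_ennreal_lt_coe_ennreal_iff.mp h2
  have hmeasmin : ∀ n : ℕ, Measurable fun ω => min (logMinus |f ω|) (n : ℝ≥0∞) :=
    fun n => (measurable_logMinus.comp hf.abs).min measurable_const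
  have hkey : (⨆ n : ℕ, ∫⁻ ω, min (logMinus |f ω|) (n : ℝ≥0∞) ∂P) = B := by
    calc (⨆ n : ℕ, ∫⁻ ω, min (logMinus |f ω|) (n : ℝ≥0∞) ∂P)
        = ∫⁻ ω, ⨆ n : ℕ, min (logMinus |f ω|) (n : ℝ≥0∞) ∂P := by
          refine (lintegral_iSup hmeasmin ?_).symm
          intro m n h ω
          exact min_le_min le_rfl (by exact_mod_cast Nat.cast_le.mpr h)
      _ = B := lintegral_congr fun ω => iSup_min_natCast _
  obtain ⟨n, hn⟩ : ∃ n : ℕ, A < ∫⁻ ω, min (logMinus |f ω|) (n : ℝ≥0∞) ∂P :=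
    lt_iSup_iff.mp (hkey ▸ hAB)
  refine ⟨n + 1, Nat.le_add_left 1 n, ?_⟩
  set M := n + 1 with hMdef
  set C := ∫⁻ ω, min (logMinus |f ω|) (M : ℝ≥0∞) ∂P with hCdef
  have hAC : A < C := by
    refine lt_of_lt_of_le hn (lintegral_mono fun ω => min_le_min le_rfl ?_)
    exact_mod_cast Nat.cast_le.mpr (Nat.le_succ n)
  have hCtop : C ≠ ⊤ := by
    have : C ≤ ∫⁻ _, (M : ℝ≥0∞) ∂P := lintegral_mono fun ω => min_le_right _ _
    rw [lintegral_const, measure_univ, mul_one] at this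
    exact (lt_of_le_of_lt this (ENNReal.natCast_lt_top M)).ne
  have hXint : Integrable (fun ω => blG M (f ω)) P := by
    refine Integrable.mono' ((integrable_const (M:ℝ)).add hfi.abs)
      ((measurable_blG M).comp hf).aestronglyMeasurable (ae_of_all _ fun ω => ?_)
    rw [Real.norm_eq_abs]
    exact abs_blG_le M (f ω)
  have hint_eq : ∫ ω, blG M (f ω) ∂P = A.toReal - C.toReal := by
    rw [integral_eq_lintegral_pos_part_sub_lintegral_neg_part hXint]
    congr 1
    · exact congrArg ENNReal.toReal (lintegral_congr fun ω => ofReal_blG M (Nat.le_add_left 1 n) (f ω))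
    · exact congrArg ENNReal.toReal (lintegral_congr fun ω => ofReal_neg_blG M (f ω))
  rw [hint_eq, sub_neg]
  exact (ENNReal.toReal_lt_toReal hA hCtop).mpr hAC

lemma integrable_blG_comp {Ω : Type*} [MeasurableSpace Ω] (P : Measure Ω)
    [IsProbabilityMeasure P] (M : ℕ) (f : Ω → ℝ) (hf : Measurable f) (hfi : Integrable f P) :
    Integrable (fun ω => blG M (f ω)) P := by
  refine Integrable.mono' ((integrable_const (M:ℝ)).add hfi.abs)
    ((measurable_blG M).comp hf).aestronglyMeasurable (ae_of_all _ fun ω => ?_)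
  rw [Real.norm_eq_abs]
  exact abs_blG_le M (f ω)

/-- The `i`-th term (for `i = j+1 ≥ 1`) of the series defining the stationary solution:
`(∏_{r=0}^{i-1} (φ₀ + b₀ ε_{t-2r-1})) (μ₀ + ε_{t-2i})`. -/
def blTerm {Ω : Type*} (μ₀ φ₀ b₀ : ℝ) (ε : ℤ → Ω → ℝ) (t : ℤ) (j : ℕ) (ω : Ω) : ℝ :=
  (∏ r ∈ Finset.range (j + 1), (φ₀ + b₀ * ε (t - 2 * (r : ℤ) - 1) ω)) *
    (μ₀ + ε (t - 2 * ((j : ℤ) + 1)) ω)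

lemma blTerm_summable {Ω : Type*} [MeasurableSpace Ω] (P : Measure Ω) [IsProbabilityMeasure P]
    (ε : ℤ → Ω → ℝ) (μ₀ φ₀ b₀ : ℝ)
    (hmeas : ∀ t, Measurable (ε t))
    (hindep : iIndepFun ε P)
    (hident : ∀ s t : ℤ, IdentDistrib (ε s) (ε t) P P)
    (hint : Integrable (ε 1) P)
    (hsq : Integrable (fun ω => (ε 1 ω) ^ 2) P)
    (hlog : elogAbs P (fun ω => φ₀ + b₀ * ε 1 ω) < 0) (t : ℤ) :
    ∀ᵐ ω ∂P, Summable (fun j => blTerm μ₀ φ₀ b₀ ε t j ω) := by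
  classical
  have hepsint : ∀ s : ℤ, Integrable (ε s) P := fun s => ((hident s 1).integrable_iff).mpr hint
  have hfmeas : ∀ s : ℤ, Measurable (fun ω => φ₀ + b₀ * ε s ω) :=
    fun s => measurable_const.add (measurable_const.mul (hmeas s))
  have hfint : ∀ s : ℤ, Integrable (fun ω => φ₀ + b₀ * ε s ω) P :=
    fun s => (integrable_const φ₀).add ((hepsint s).const_mul b₀)
  obtain ⟨M, hM1, hm⟩ := exists_blG_neg_integral P _ (hfmeas 1) (hfint 1) hlog
  set m := ∫ ω, blG M (φ₀ + b₀ * ε 1 ω) ∂P with hmdef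
  -- the SLLN part
  set F : ℝ → ℝ := fun x => blG M (φ₀ + b₀ * x) with hFdef
  have hF : Measurable F :=
    (measurable_blG M).comp (measurable_const.add (measurable_const.mul measurable_id))
  set X : ℕ → Ω → ℝ := fun r ω => F (ε (t - 2 * (r : ℤ) - 1) ω) with hXdef
  have hidcomp : ∀ s s' : ℤ,
      IdentDistrib (fun ω => F (ε s ω)) (fun ω => F (ε s' ω)) P P :=
    fun s s' => (hident s s').comp hF
  have hFint : Integrable (fun ω => F (ε 1 ω)) P :=
    integrable_blG_comp P M _ (hfmeas 1) (hfint 1)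
  have hX0int : Integrable (X 0) P := ((hidcomp _ 1).integrable_iff).mpr hFint
  have hpind : Pairwise (Function.onFun (IndepFun · · P) X) := by
    intro r s hrs
    have hne : (t - 2 * (r : ℤ) - 1) ≠ (t - 2 * (s : ℤ) - 1) := by omega
    exact (hindep.indepFun hne).comp hF hF
  have hXident : ∀ i, IdentDistrib (X i) (X 0) P P := fun i => hidcomp _ _
  have hEX0 : P[X 0] = m := (hidcomp _ 1).integral_eq
  have hslln := strong_law_ae X hX0int hpind hXident
  rw [hEX0] at hslln
  -- the Borel-Cantelli part
  have hY2 : Integrable (fun ω => (μ₀ + ε 1 ω) ^ 2) P := by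
    have : (fun ω => (μ₀ + ε 1 ω) ^ 2)
        = fun ω => μ₀ ^ 2 + (2 * μ₀) * ε 1 ω + (ε 1 ω) ^ 2 := funext fun ω => by ring
    rw [this]
    exact ((integrable_const _).add (hint.const_mul _)).add hsq
  set K := ∫⁻ ω, ENNReal.ofReal ((μ₀ + ε 1 ω) ^ 2) ∂P with hKdef
  have hK : K ≠ ⊤ := by
    have := (hasFiniteIntegral_iff_ofReal (ae_of_all _ fun ω => sq_nonneg (μ₀ + ε 1 ω))).mp
      hY2.hasFiniteIntegral
    exact this.ne
  set δ : ℝ := -m / 4 with hδdef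
  have hδ : 0 < δ := by
    rw [hδdef]; linarith
  set s : ℕ → Set Ω :=
    fun j => {ω | Real.exp (δ * ((j : ℝ) + 1)) ≤ |μ₀ + ε (t - 2 * ((j : ℤ) + 1)) ω|} with hsdef
  have hsetmeas : ∀ R : ℝ, MeasurableSet {x : ℝ | R ≤ |μ₀ + x|} :=
    fun R => measurableSet_le measurable_const ((measurable_const.add measurable_id).abs)
  have hmeq : ∀ j : ℕ, P (s j) = P {ω | Real.exp (δ * ((j : ℝ) + 1)) ≤ |μ₀ + ε 1 ω|} :=
    fun j => (hident (t - 2 * ((j : ℤ) + 1)) 1).measure_mem_eq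
      (hsetmeas (Real.exp (δ * ((j : ℝ) + 1))))
  have hcheb : ∀ R : ℝ, 0 < R →
      P {ω | R ≤ |μ₀ + ε 1 ω|} ≤ K * ENNReal.ofReal ((R ^ 2)⁻¹) := by
    intro R hR
    have haem : AEMeasurable (fun ω => ENNReal.ofReal ((μ₀ + ε 1 ω) ^ 2)) P :=
      (ENNReal.measurable_ofReal.comp
        ((measurable_const.add (hmeas 1)).pow_const 2)).aemeasurable
    have h1 := mul_meas_ge_le_lintegral₀ haem (ENNReal.ofReal (R ^ 2))
    have hsub : {ω | R ≤ |μ₀ + ε 1 ω|}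
        ⊆ {ω | ENNReal.ofReal (R ^ 2) ≤ ENNReal.ofReal ((μ₀ + ε 1 ω) ^ 2)} := by
      intro ω h
      simp only [Set.mem_setOf_eq] at h ⊢
      apply ENNReal.ofReal_le_ofReal
      calc R ^ 2 ≤ |μ₀ + ε 1 ω| ^ 2 := pow_le_pow_left₀ hR.le h 2
        _ = (μ₀ + ε 1 ω) ^ 2 := sq_abs _
    calc P {ω | R ≤ |μ₀ + ε 1 ω|}
        ≤ P {ω | ENNReal.ofReal (R ^ 2) ≤ ENNReal.ofReal ((μ₀ + ε 1 ω) ^ 2)} :=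
          measure_mono hsub
      _ ≤ K / ENNReal.ofReal (R ^ 2) := by
          rw [ENNReal.le_div_iff_mul_le
            (Or.inl (by simp [ENNReal.ofReal_eq_zero]; positivity))
            (Or.inl ENNReal.ofReal_ne_top)]
          rw [mul_comm]
          exact h1
      _ = K * ENNReal.ofReal ((R ^ 2)⁻¹) := by
          rw [ENNReal.ofReal_inv_of_pos (by positivity), div_eq_mul_inv]
  have hρ2 : Real.exp (-2 * δ) < 1 := Real.exp_lt_one_iff.mpr (by linarith)
  have hgeo : Summable (fun j : ℕ => Real.exp (-2 * δ) ^ (j + 1)) := by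
    simp_rw [pow_succ]
    exact (summable_geometric_of_lt_one (Real.exp_pos _).le hρ2).mul_right _
  have hbound : ∀ j : ℕ, P (s j) ≤ K * ENNReal.ofReal (Real.exp (-2 * δ) ^ (j + 1)) := by
    intro j
    rw [hmeq j]
    have h2 : ((Real.exp (δ * ((j : ℝ) + 1))) ^ 2)⁻¹ = Real.exp (-2 * δ) ^ (j + 1) := by
      rw [sq, ← Real.exp_add, ← Real.exp_neg, ← Real.exp_nat_mul]
      congr 1
      push_cast
      ring
    have := hcheb (Real.exp (δ * ((j : ℝ) + 1))) (Real.exp_pos _)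
    rwa [h2] at this
  have hsum : (∑' j, P (s j)) ≠ ⊤ := by
    have h3 : (∑' j, P (s j)) ≤ K * ∑' j, ENNReal.ofReal (Real.exp (-2 * δ) ^ (j + 1)) := by
      rw [← ENNReal.tsum_mul_left]
      exact ENNReal.tsum_le_tsum hbound
    have h4 : (∑' j : ℕ, ENNReal.ofReal (Real.exp (-2 * δ) ^ (j + 1)))
        = ENNReal.ofReal (∑' j : ℕ, Real.exp (-2 * δ) ^ (j + 1)) :=
      (ENNReal.ofReal_tsum_of_nonneg (fun n => pow_nonneg (Real.exp_pos _).le _) hgeo).symm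
    refine (lt_of_le_of_lt h3 ?_).ne
    rw [h4]
    exact ENNReal.mul_lt_top hK.lt_top ENNReal.ofReal_lt_top
  have hbc := MeasureTheory.ae_eventually_notMem hsum
  -- combine
  filter_upwards [hslln, hbc] with ω hω1 hω2
  set ρ : ℝ := Real.exp (m / 4) with hρdef
  have hρ0 : 0 ≤ ρ := (Real.exp_pos _).le
  have hρ1 : ρ < 1 := Real.exp_lt_one_iff.mpr (by linarith)
  have hev1 : ∀ᶠ n : ℕ in atTop,
      (n : ℝ)⁻¹ • (∑ i ∈ Finset.range n, X i ω) < m / 2 :=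
    (tendsto_order.1 hω1).2 (m / 2) (by linarith)
  obtain ⟨N₁, hN₁⟩ := eventually_atTop.mp hev1
  obtain ⟨N₂, hN₂⟩ := eventually_atTop.mp hω2
  set N := max N₁ N₂ with hNdef
  have key : ∀ j : ℕ, N ≤ j → |blTerm μ₀ φ₀ b₀ ε t j ω| ≤ ρ ^ (j + 1) := by
    intro j hj
    have hj1 : N₁ ≤ j + 1 := le_trans (le_trans (le_max_left _ _) hj) (Nat.le_succ j)
    have hj2 : N₂ ≤ j := le_trans (le_max_right _ _) hj
    have hsum1 := hN₁ (j + 1) hj1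
    rw [smul_eq_mul] at hsum1
    have hpos : (0:ℝ) < ((j+1:ℕ):ℝ) := by positivity
    have hSle : (∑ i ∈ Finset.range (j+1), X i ω) ≤ ((j+1:ℕ):ℝ) * (m/2) := by
      have heq : (∑ i ∈ Finset.range (j+1), X i ω)
          = ((j+1:ℕ):ℝ) * (((j+1:ℕ):ℝ)⁻¹ * (∑ i ∈ Finset.range (j+1), X i ω)) := by
        field_simp
      rw [heq]
      exact mul_le_mul_of_nonneg_left hsum1.le hpos.le
    have h1 : |∏ r ∈ Finset.range (j+1), (φ₀ + b₀ * ε (t - 2*(r:ℤ) - 1) ω)|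
        ≤ Real.exp (((j+1:ℕ):ℝ) * (m/2)) := by
      rw [Finset.abs_prod]
      calc ∏ r ∈ Finset.range (j+1), |φ₀ + b₀ * ε (t - 2*(r:ℤ) - 1) ω|
          ≤ ∏ r ∈ Finset.range (j+1), Real.exp (X r ω) :=
            Finset.prod_le_prod (fun _ _ => abs_nonneg _) (fun r _ => abs_le_exp_blG M _)
        _ = Real.exp (∑ r ∈ Finset.range (j+1), X r ω) := (Real.exp_sum _ _).symm
        _ ≤ _ := Real.exp_le_exp.mpr hSle
    have h2 : |μ₀ + ε (t - 2*((j:ℤ)+1)) ω| ≤ Real.exp (δ * ((j:ℝ)+1)) := by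
      have hns := hN₂ j hj2
      simp only [hsdef, Set.mem_setOf_eq] at hns
      exact (not_le.mp hns).le
    calc |blTerm μ₀ φ₀ b₀ ε t j ω|
        = |∏ r ∈ Finset.range (j+1), (φ₀ + b₀ * ε (t - 2*(r:ℤ) - 1) ω)|
            * |μ₀ + ε (t - 2*((j:ℤ)+1)) ω| := by unfold blTerm; rw [abs_mul]
      _ ≤ Real.exp (((j+1:ℕ):ℝ) * (m/2)) * Real.exp (δ * ((j:ℝ)+1)) :=
          mul_le_mul h1 h2 (abs_nonneg _) (Real.exp_pos _).le
      _ = ρ ^ (j+1) := by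
          rw [← Real.exp_add, hρdef, ← Real.exp_nat_mul]
          congr 1
          push_cast
          rw [hδdef]
          ring
  refine (summable_nat_add_iff N).mp ?_
  refine Summable.of_norm_bounded (g := fun i => ρ^(N+1) * ρ^i)
    ((summable_geometric_of_lt_one hρ0 hρ1).mul_left _) (fun i => ?_)
  rw [Real.norm_eq_abs]
  calc |blTerm μ₀ φ₀ b₀ ε t (i + N) ω| ≤ ρ ^ (i + N + 1) := key (i + N) (Nat.le_add_left N i)
    _ = ρ^(N+1) * ρ^i := by rw [← pow_add]; congr 1; omega

/-- `S_t = μ₀ + ε_t + Σ_{i=1}^∞ [∏_{r=0}^{i-1} (φ₀ + b₀ ε_{t-2r-1})] (μ₀ + ε_{t-2i})`. -/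
def blS {Ω : Type*} (μ₀ φ₀ b₀ : ℝ) (ε : ℤ → Ω → ℝ) (t : ℤ) (ω : Ω) : ℝ :=
  μ₀ + ε t ω + ∑' j : ℕ, blTerm μ₀ φ₀ b₀ ε t j ω

lemma blTerm_zero {Ω : Type*} (μ₀ φ₀ b₀ : ℝ) (ε : ℤ → Ω → ℝ) (t : ℤ) (ω : Ω) :
    blTerm μ₀ φ₀ b₀ ε t 0 ω = (φ₀ + b₀ * ε (t - 1) ω) * (μ₀ + ε (t - 2) ω) := by
  unfold blTerm
  rw [Finset.prod_range_one]
  norm_num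

lemma blTerm_succ {Ω : Type*} (μ₀ φ₀ b₀ : ℝ) (ε : ℤ → Ω → ℝ) (t : ℤ) (j : ℕ) (ω : Ω) :
    blTerm μ₀ φ₀ b₀ ε t (j + 1) ω
      = (φ₀ + b₀ * ε (t - 1) ω) * blTerm μ₀ φ₀ b₀ ε (t - 2) j ω := by
  unfold blTerm
  rw [Finset.prod_range_succ']
  have hprod : (∏ r ∈ Finset.range (j+1), (φ₀ + b₀ * ε (t - 2 * ((r+1 : ℕ) : ℤ) - 1) ω))
      = ∏ r ∈ Finset.range (j+1), (φ₀ + b₀ * ε ((t-2) - 2 * (r:ℤ) - 1) ω) :=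
    Finset.prod_congr rfl fun r _ => by
      rw [show t - 2 * ((r+1 : ℕ) : ℤ) - 1 = (t-2) - 2 * (r:ℤ) - 1 by push_cast; ring]
  rw [hprod, show t - 2*(((0:ℕ)):ℤ) - 1 = t - 1 by norm_num,
    show t - 2*(((j+1:ℕ):ℤ)+1) = (t-2) - 2*((j:ℤ)+1) by push_cast; ring]
  ring

/-- if `E log|φ₀ + b₀ ε₁| < 0` then `(S_t)` solves the bilinear recursion:
for every `t`, almost surely `S_t = μ₀ + φ₀ S_{t-2} + b₀ S_{t-2} ε_{t-1} + ε_t`. -/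
theorem bilinear_S_solves_recursion
    {Ω : Type*} [MeasurableSpace Ω] (P : Measure Ω) [IsProbabilityMeasure P]
    (ε : ℤ → Ω → ℝ) (μ₀ φ₀ b₀ σ₀sq : ℝ)
    (hmeas : ∀ t, Measurable (ε t))
    (hindep : iIndepFun ε P)
    (hident : ∀ s t : ℤ, IdentDistrib (ε s) (ε t) P P)
    (hint : Integrable (ε 1) P) (hmean : ∫ ω, ε 1 ω ∂P = 0)
    (hsq : Integrable (fun ω => (ε 1 ω) ^ 2) P) (hvar : ∫ ω, (ε 1 ω) ^ 2 ∂P = σ₀sq)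
    (hσ : 0 < σ₀sq)
    (hlog : elogAbs P (fun ω => φ₀ + b₀ * ε 1 ω) < 0) :
    ∀ t : ℤ, ∀ᵐ ω ∂P,
      blS μ₀ φ₀ b₀ ε t ω =
        μ₀ + φ₀ * blS μ₀ φ₀ b₀ ε (t - 2) ω +
          b₀ * blS μ₀ φ₀ b₀ ε (t - 2) ω * ε (t - 1) ω + ε t ω := by
  intro t
  filter_upwards [blTerm_summable P ε μ₀ φ₀ b₀ hmeas hindep hident hint hsq hlog t,
    blTerm_summable P ε μ₀ φ₀ b₀ hmeas hindep hident hint hsq hlog (t - 2)] with ω h1 h2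
  have hz := Summable.tsum_eq_zero_add h1
  have hshift : ∑' j : ℕ, blTerm μ₀ φ₀ b₀ ε t (j + 1) ω
      = (φ₀ + b₀ * ε (t - 1) ω) * ∑' j : ℕ, blTerm μ₀ φ₀ b₀ ε (t - 2) j ω := by
    rw [tsum_congr (fun j => blTerm_succ μ₀ φ₀ b₀ ε t j ω), tsum_mul_left]
  unfold blS
  rw [hz, blTerm_zero, hshift]
  ring
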